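/- If V is a 2×2 unitary matrix satisfying V·Z·V† = ω·Z for some complex scalar ω with |ω| = 1, then there exist s ∈ {0,1}, a real α, and a unit complex scalar c such that V = c · X^s · Z^α, where Z^α := diag(1, e^{iπα}). -/

import Mathlib

open Matrix Complex

noncomputable section

def PX : Matrix (Fin 2) (Fin 2) ℂ := !![0, 1; 1, 0]
def PZ : Matrix (Fin 2) (Fin 2) ℂ := !![1, 0; 0, -1]

/-- `Z^α = diag(1, e^{iπα})`. -/
def Zpow (α : ℝ) : Matrix (Fin 2) (Fin 2) ℂ :=
  !![1, 0; 0, Complex.exp (Complex.I * (Real.pi * α))]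

/-! Conjugating `Z` by a unitary `V` can only give `±Z`: the diagonal entries of `V` are
fixed and the off-diagonal ones negated by the commutation relation, so `V` is diagonal
(`ω = 1`) or anti-diagonal (`ω ≠ 1`). A diagonal unitary is a phase times `Z^α`, and an
anti-diagonal one becomes diagonal after multiplying by `X`. -/

lemma exists_exp_I_pi_mul_eq {z : ℂ} (hz : ‖z‖ = 1) :
    ∃ α : ℝ, exp (I * (Real.pi * α)) = z := by
  refine ⟨z.arg / Real.pi, ?_⟩
  have hπ : (Real.pi : ℂ) ≠ 0 := by exact_mod_cast Real.pi_ne_zero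
  have harg : (Real.pi : ℂ) * ((z.arg / Real.pi : ℝ) : ℂ) = z.arg := by
    push_cast
    exact mul_div_cancel₀ _ hπ
  rw [harg, mul_comm]
  simpa [hz] using norm_mul_exp_arg_mul_I z

open ComplexConjugate in
lemma norm_eq_one_of_conj_mul_self_eq_one {z : ℂ} (h : conj z * z = 1) : ‖z‖ = 1 := by
  have hsq : (Complex.normSq z : ℂ) = 1 := normSq_eq_conj_mul_self.trans h
  rw [← pow_eq_one_iff_of_nonneg (norm_nonneg z) two_ne_zero, ← normSq_eq_norm_sq]
  exact_mod_cast hsq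

lemma mul_eq_smul_mul_of_mul_mul_conjTranspose_eq {n R : Type*} [Fintype n] [DecidableEq n]
    [CommSemiring R] [StarRing R] {V A B : Matrix n n R} {ω : R}
    (hV : Vᴴ * V = 1) (h : V * A * Vᴴ = ω • B) : V * A = ω • (B * V) := by
  calc V * A = V * A * (Vᴴ * V) := by rw [hV, Matrix.mul_one]
    _ = (V * A * Vᴴ) * V := by simp only [Matrix.mul_assoc]
    _ = ω • (B * V) := by rw [h, Matrix.smul_mul]

lemma offDiag_eq_zero_of_mul_PZ_eq {V : Matrix (Fin 2) (Fin 2) ℂ} (h : V * PZ = PZ * V) :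
    V 0 1 = 0 ∧ V 1 0 = 0 := by
  have h01 : -V 0 1 = V 0 1 := by
    simpa [Matrix.mul_apply, Fin.sum_univ_two, PZ] using congrFun (congrFun h 0) 1
  have h10 : V 1 0 = -V 1 0 := by
    simpa [Matrix.mul_apply, Fin.sum_univ_two, PZ] using congrFun (congrFun h 1) 0
  exact ⟨by linear_combination (-1 / 2 : ℂ) * h01, by linear_combination (1 / 2 : ℂ) * h10⟩

lemma diag_eq_zero_of_mul_PZ_eq_smul {V : Matrix (Fin 2) (Fin 2) ℂ} {ω : ℂ} (hω : ω ≠ 1)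
    (h : V * PZ = ω • (PZ * V)) : V 0 0 = 0 ∧ V 1 1 = 0 := by
  have h00 : V 0 0 = ω * V 0 0 := by
    simpa [Matrix.mul_apply, Fin.sum_univ_two, PZ, vecMul, dotProduct]
      using congrFun (congrFun h 0) 0
  have h11 : V 1 1 = ω * V 1 1 := by
    simpa [Matrix.mul_apply, Fin.sum_univ_two, PZ, vecMul, dotProduct]
      using congrFun (congrFun h 1) 1
  have hω' : ω - 1 ≠ 0 := sub_ne_zero.mpr hω
  exact ⟨(mul_eq_zero.mp (by linear_combination -h00 : (ω - 1) * V 0 0 = 0)).resolve_left hω',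
    (mul_eq_zero.mp (by linear_combination -h11 : (ω - 1) * V 1 1 = 0)).resolve_left hω'⟩

open ComplexConjugate in
lemma exists_smul_Zpow_of_unitary_of_offDiag_eq_zero {V : Matrix (Fin 2) (Fin 2) ℂ}
    (hV : Vᴴ * V = 1) (h01 : V 0 1 = 0) (h10 : V 1 0 = 0) :
    ∃ α : ℝ, ∃ c : ℂ, ‖c‖ = 1 ∧ V = c • Zpow α := by
  have hV00 : conj (V 0 0) * V 0 0 = 1 := by
    simpa [Matrix.mul_apply, Fin.sum_univ_two, h10] using congrFun (congrFun hV 0) 0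
  have hV11 : conj (V 1 1) * V 1 1 = 1 := by
    simpa [Matrix.mul_apply, Fin.sum_univ_two, h01] using congrFun (congrFun hV 1) 1
  have ha := norm_eq_one_of_conj_mul_self_eq_one hV00
  have hd := norm_eq_one_of_conj_mul_self_eq_one hV11
  have ha0 : V 0 0 ≠ 0 := norm_ne_zero_iff.mp (by rw [ha]; exact one_ne_zero)
  obtain ⟨α, hα⟩ : ∃ α : ℝ, exp (I * (Real.pi * α)) = V 1 1 / V 0 0 :=
    exists_exp_I_pi_mul_eq (by rw [norm_div, ha, hd, div_one])
  refine ⟨α, V 0 0, ha, ?_⟩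
  ext i j
  fin_cases i <;> fin_cases j <;> simp [Zpow, h01, h10, hα, mul_div_cancel₀ _ ha0]

lemma PX_conjTranspose_mul_self : PXᴴ * PX = 1 := by
  ext i j
  fin_cases i <;> fin_cases j <;> simp [PX, Matrix.mul_apply, Fin.sum_univ_two]

lemma PX_mul_self : PX * PX = 1 := by
  ext i j
  fin_cases i <;> fin_cases j <;> simp [PX, Matrix.mul_apply, Fin.sum_univ_two]

lemma exists_smul_PX_mul_Zpow_of_unitary_of_diag_eq_zero {V : Matrix (Fin 2) (Fin 2) ℂ}
    (hV : Vᴴ * V = 1) (h00 : V 0 0 = 0) (h11 : V 1 1 = 0) :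
    ∃ α : ℝ, ∃ c : ℂ, ‖c‖ = 1 ∧ V = c • (PX * Zpow α) := by
  have hXV : (PX * V)ᴴ * (PX * V) = 1 := by
    rw [conjTranspose_mul, Matrix.mul_assoc, ← Matrix.mul_assoc PXᴴ, PX_conjTranspose_mul_self,
      Matrix.one_mul, hV]
  obtain ⟨α, c, hc, hα⟩ := exists_smul_Zpow_of_unitary_of_offDiag_eq_zero hXV
    (by simp [PX, Matrix.mul_apply, Fin.sum_univ_two, h11])
    (by simp [PX, Matrix.mul_apply, Fin.sum_univ_two, h00])
  refine ⟨α, c, hc, ?_⟩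
  rw [← Matrix.mul_smul, ← hα, ← Matrix.mul_assoc, PX_mul_self, Matrix.one_mul]

theorem stmt6_general (V : Matrix (Fin 2) (Fin 2) ℂ) (hV : Vᴴ * V = 1)
    (ω : ℂ) (hVZ : V * PZ * Vᴴ = ω • PZ) :
    ∃ s ∈ ({0, 1} : Set ℕ), ∃ α : ℝ, ∃ c : ℂ,
      ‖c‖ = 1 ∧ V = c • (PX ^ s * Zpow α) := by
  have hcomm := mul_eq_smul_mul_of_mul_mul_conjTranspose_eq hV hVZ
  by_cases hω : ω = 1
  · subst hω
    obtain ⟨h01, h10⟩ := offDiag_eq_zero_of_mul_PZ_eq (by simpa using hcomm)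
    obtain ⟨α, c, hc, hVα⟩ := exists_smul_Zpow_of_unitary_of_offDiag_eq_zero hV h01 h10
    exact ⟨0, by simp, α, c, hc, by simpa using hVα⟩
  · obtain ⟨h00, h11⟩ := diag_eq_zero_of_mul_PZ_eq_smul hω hcomm
    obtain ⟨α, c, hc, hVα⟩ := exists_smul_PX_mul_Zpow_of_unitary_of_diag_eq_zero hV h00 h11
    exact ⟨1, by simp, α, c, hc, by simpa using hVα⟩

theorem stmt6 (V : Matrix (Fin 2) (Fin 2) ℂ) (hV : Vᴴ * V = 1)
    (ω : ℂ) (hω : ‖ω‖ = 1) (hVZ : V * PZ * Vᴴ = ω • PZ) :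
    ∃ s ∈ ({0, 1} : Set ℕ), ∃ α : ℝ, ∃ c : ℂ,
      ‖c‖ = 1 ∧ V = c • (PX ^ s * Zpow α) :=
  stmt6_general V hV ω hVZ
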